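/- arXiv:1210.1651 — 4 statements merged into one kernel-verified Lean document; each statement's English description precedes it below -/
import Mathlib

section
/- Let F₁ ⊆ F₂ be a field extension with both F₁ and F₂ algebraically closed, and let p₁,…,p_s ∈ F₁[X₁,…,Xₙ]. If the common zero set V of p₁,…,p_s in F₁ⁿ is irreducible (i.e., V is nonempty and V is not the union of two zero sets of families of polynomials over F₂ each of which is a proper subset of V — equivalently, V is an irreducible closed set in the Zariski topology), then the common zero set of p₁,…,p_s in F₂ⁿ is irreducible as well. -/
/-!
Let `V₁ ⊆ F₁ⁿ` and `V₂ ⊆ F₂ⁿ` be the two zero sets. Irreducibility of `V₂` follows once we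
know: if `f g` vanishes on `V₂`, then `f` or `g` does. Expand
`f = ∑ bᵢ fᵢ` with `fᵢ` over `F₁` and `bᵢ ∈ F₂` linearly independent over `F₁`; at an
`F₁`-point `x`, `f(x) = 0` iff all `fᵢ(x) = 0`. So `V₁` is covered by the zero sets of the
`fᵢ` and of the `gⱼ`, and irreducibility of `V₁` puts it inside one of them, say the first.
By the Nullstellensatz over `F₁` each `fᵢ` lies in the radical of `(p₁, …, p_s)`, so it
vanishes on `V₂`, and hence so does `f`.
-/

open MvPolynomial

/-- The common zero set in `Fⁿ` of a family of polynomials over `F`. -/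
def zeroSet {n : ℕ} (F : Type) [CommRing F] (S : Set (MvPolynomial (Fin n) F)) :
    Set (Fin n → F) :=
  {x | ∀ p ∈ S, MvPolynomial.eval x p = 0}

/-- A variety `V ⊆ Fⁿ` is irreducible if it is nonempty and is not the union of two
zero sets of polynomial families, each of which is a proper subset of `V`. -/
def IsIrreducibleVariety {n : ℕ} (F : Type) [CommRing F] (V : Set (Fin n → F)) : Prop :=
  V.Nonempty ∧
    ¬ ∃ S₁ S₂ : Set (MvPolynomial (Fin n) F),
      zeroSet F S₁ ⊂ V ∧ zeroSet F S₂ ⊂ V ∧ V = zeroSet F S₁ ∪ zeroSet F S₂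

section Irreducible

variable {n : ℕ} {F : Type} [CommRing F]

theorem zeroSet_union (S T : Set (MvPolynomial (Fin n) F)) :
    zeroSet F (S ∪ T) = zeroSet F S ∩ zeroSet F T := by
  ext x
  simp only [zeroSet, Set.mem_ofPred_eq, Set.mem_inter_iff, Set.mem_union, or_imp, forall_and]

theorem IsIrreducibleVariety.subset_or_subset {S A B : Set (MvPolynomial (Fin n) F)}
    (h : IsIrreducibleVariety F (zeroSet F S))
    (hAB : zeroSet F S ⊆ zeroSet F A ∪ zeroSet F B) :
    zeroSet F S ⊆ zeroSet F A ∨ zeroSet F S ⊆ zeroSet F B := by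
  by_contra! hne
  refine h.2 ⟨S ∪ A, S ∪ B, ?_, ?_, ?_⟩
  · rw [zeroSet_union]
    exact Set.inter_subset_left.ssubset_of_not_subset fun hS =>
      hne.1 (hS.trans Set.inter_subset_right)
  · rw [zeroSet_union]
    exact Set.inter_subset_left.ssubset_of_not_subset fun hS =>
      hne.2 (hS.trans Set.inter_subset_right)
  · rw [zeroSet_union, zeroSet_union, ← Set.inter_union_distrib_left]
    exact (Set.inter_eq_left.mpr hAB).symm

theorem isIrreducibleVariety_of_forall_mul_eq_zero {V : Set (Fin n → F)} (hV : V.Nonempty)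
    (hmul : ∀ f g : MvPolynomial (Fin n) F, (∀ y ∈ V, eval y f * eval y g = 0) →
      (∀ y ∈ V, eval y f = 0) ∨ (∀ y ∈ V, eval y g = 0)) :
    IsIrreducibleVariety F V := by
  refine ⟨hV, ?_⟩
  rintro ⟨S₁, S₂, h₁, h₂, hV⟩
  obtain ⟨a, haV, haS⟩ := Set.exists_of_ssubset h₁
  obtain ⟨c, hcV, hcS⟩ := Set.exists_of_ssubset h₂
  simp only [zeroSet, Set.mem_ofPred_eq, not_forall] at haS hcS
  obtain ⟨f, hf, hfa⟩ := haS
  obtain ⟨g, hg, hgc⟩ := hcS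
  have hfg : ∀ y ∈ V, eval y f * eval y g = 0 := by
    intro y hy
    rcases hV ▸ hy with hy | hy
    · rw [hy f hf, zero_mul]
    · rw [hy g hg, mul_zero]
  rcases hmul f g hfg with hf0 | hg0
  · exact hfa (hf0 a haV)
  · exact hgc (hg0 c hcV)

end Irreducible

section Extension

variable {σ K L : Type*} [Field K] [Field L] [Algebra K L]

theorem eval_comp_map {R S : Type*} [CommRing R] [CommRing S] (φ : R →+* S) (x : σ → R)
    (q : MvPolynomial σ R) : eval (φ ∘ x) (map φ q) = φ (eval x q) := by
  rw [eval_map, eval₂_comp]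

theorem exists_linearIndependent_sum_eq (f : MvPolynomial σ L) :
    ∃ (r : ℕ) (b : Fin r → L) (fd : Fin r → MvPolynomial σ K), LinearIndependent K b ∧
      f = ∑ i, C (b i) * map (algebraMap K L) (fd i) := by
  classical
  set M := Submodule.span K (f.coeffs : Set L)
  have hM (m : σ →₀ ℕ) : coeff m f ∈ M := by
    by_cases hm : coeff m f = 0
    · exact hm ▸ M.zero_mem
    · exact Submodule.subset_span (coeff_mem_coeffs m hm)
  let b := Module.finBasis K M
  refine ⟨_, fun i => b i, fun i => ∑ m ∈ f.support, monomial m (b.repr ⟨coeff m f, hM m⟩ i),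
    b.linearIndependent.map' M.subtype M.ker_subtype, ?_⟩
  simp only [map_sum, map_monomial, Finset.mul_sum, C_mul_monomial]
  rw [Finset.sum_comm]
  conv_lhs => rw [f.as_sum]
  refine Finset.sum_congr rfl fun m _ => ?_
  rw [← map_sum (monomial m)]
  congr 1
  calc coeff m f = ((∑ i, b.repr ⟨coeff m f, hM m⟩ i • b i : M) : L) := by rw [b.sum_repr]
    _ = _ := by
      push_cast
      exact Finset.sum_congr rfl fun i _ => by rw [Algebra.smul_def, mul_comm]

theorem eval_algebraMap_comp_sum_eq_zero_iff {r : ℕ} {b : Fin r → L}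
    (hb : LinearIndependent K b) (fd : Fin r → MvPolynomial σ K) (x : σ → K) :
    eval (algebraMap K L ∘ x) (∑ i, C (b i) * map (algebraMap K L) (fd i)) = 0 ↔
      ∀ i, eval x (fd i) = 0 := by
  have hsum : eval (algebraMap K L ∘ x) (∑ i, C (b i) * map (algebraMap K L) (fd i)) =
      ∑ i, eval x (fd i) • b i := by
    simp only [map_sum, eval_mul, eval_C, eval_comp_map, Algebra.smul_def, mul_comm]
  rw [hsum]
  exact ⟨Fintype.linearIndependent_iff.mp hb _, fun h => by simp [h]⟩

end Extension

section ZeroSetExtension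

variable {n : ℕ} {ι : Type*} {K L : Type} [Field K] [Field L] [Algebra K L]

theorem zeroSet_map_eq_zeroLocus (p : ι → MvPolynomial (Fin n) K) :
    zeroSet L (Set.range fun i => map (algebraMap K L) (p i)) =
      zeroLocus L (Ideal.span (Set.range p)) := by
  rw [zeroLocus_span]
  ext y
  simp only [zeroSet, Set.forall_mem_range, Set.mem_ofPred_eq, eval_map, aeval_def]

theorem algebraMap_comp_mem_zeroSet_map {p : ι → MvPolynomial (Fin n) K} {x : Fin n → K}
    (hx : x ∈ zeroSet K (Set.range p)) :
    algebraMap K L ∘ x ∈ zeroSet L (Set.range fun i => map (algebraMap K L) (p i)) := by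
  rintro _ ⟨i, rfl⟩
  rw [eval_comp_map, hx (p i) ⟨i, rfl⟩, map_zero]

theorem eval_map_eq_zero_of_forall_eval_eq_zero [IsAlgClosed K]
    {p : ι → MvPolynomial (Fin n) K} {q : MvPolynomial (Fin n) K}
    (hq : ∀ x ∈ zeroSet K (Set.range p), eval x q = 0) :
    ∀ y ∈ zeroSet L (Set.range fun i => map (algebraMap K L) (p i)),
      eval y (map (algebraMap K L) q) = 0 := by
  have hrad : q ∈ (Ideal.span (Set.range p)).radical := by
    rw [← vanishingIdeal_zeroLocus_eq_radical (K := K), zeroLocus_span]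
    exact hq -- `aeval` into `K` itself unfolds to `eval`
  intro y hy
  rw [zeroSet_map_eq_zeroLocus] at hy
  simpa [eval_map, aeval_def] using radical_le_vanishingIdeal_zeroLocus (K := L) _ hrad y hy

end ZeroSetExtension

theorem irreducible_variety_extension_general (n s : ℕ) (F₁ F₂ : Type)
    [Field F₁] [Field F₂] [IsAlgClosed F₁] [Algebra F₁ F₂]
    (p : Fin s → MvPolynomial (Fin n) F₁)
    (h : IsIrreducibleVariety F₁ (zeroSet F₁ (Set.range p))) :
    IsIrreducibleVariety F₂
      (zeroSet F₂ (Set.range fun i => MvPolynomial.map (algebraMap F₁ F₂) (p i))) := by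
  obtain ⟨x₀, hx₀⟩ := h.1
  refine isIrreducibleVariety_of_forall_mul_eq_zero ⟨_, algebraMap_comp_mem_zeroSet_map hx₀⟩ ?_
  intro f g hfg
  obtain ⟨r, b, fd, hb, rfl⟩ := exists_linearIndependent_sum_eq (K := F₁) f
  obtain ⟨t, c, gd, hc, rfl⟩ := exists_linearIndependent_sum_eq (K := F₁) g
  have hcover : zeroSet F₁ (Set.range p) ⊆
      zeroSet F₁ (Set.range fd) ∪ zeroSet F₁ (Set.range gd) := by
    intro x hx
    rcases mul_eq_zero.mp (hfg _ (algebraMap_comp_mem_zeroSet_map hx)) with hf | hg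
    · exact Or.inl <| Set.forall_mem_range.mpr <|
        (eval_algebraMap_comp_sum_eq_zero_iff hb fd x).mp hf
    · exact Or.inr <| Set.forall_mem_range.mpr <|
        (eval_algebraMap_comp_sum_eq_zero_iff hc gd x).mp hg
  refine (h.subset_or_subset hcover).imp (fun hV y hy => ?_) (fun hV y hy => ?_) <;>
  · simp only [map_sum, eval_mul]
    refine Finset.sum_eq_zero fun i _ => ?_
    rw [eval_map_eq_zero_of_forall_eval_eq_zero (fun x hx => hV hx _ ⟨i, rfl⟩) y hy, mul_zero]

/-- **Irreducibility is preserved under extensions of algebraically closed fields.**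
If `F₁ ⊆ F₂` are algebraically closed fields and the common zero set of
`p₁, …, p_s ∈ F₁[X₁,…,Xₙ]` in `F₁ⁿ` is irreducible, then so is their common zero set
in `F₂ⁿ`. -/
theorem irreducible_variety_extension (n s : ℕ) (F₁ F₂ : Type)
    [Field F₁] [Field F₂] [IsAlgClosed F₁] [IsAlgClosed F₂] [Algebra F₁ F₂]
    (p : Fin s → MvPolynomial (Fin n) F₁)
    (h : IsIrreducibleVariety F₁ (zeroSet F₁ (Set.range p))) :
    IsIrreducibleVariety F₂
      (zeroSet F₂ (Set.range fun i => MvPolynomial.map (algebraMap F₁ F₂) (p i))) :=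
  irreducible_variety_extension_general n s F₁ F₂ p h
end

section
/- Let R be a UFD with the p-property. If there exist primes p and q in R with |p| < 1 < |q|, then there are infinitely many pairwise non-associated primes of R with absolute value strictly less than 1, and infinitely many pairwise non-associated primes of R with absolute value strictly greater than 1. -/
/-- A UFD `R` together with an absolute value `|·|` has the *p-property* if every unit has
absolute value `1` and, whenever there are primes `p`, `q` with `|p| < 1 < |q|`, there is
another prime `r` not associated to `p` with `|r| < 1`. -/
def IsUFDWithPProperty (R : Type) [CommRing R] [IsDomain R] [UniqueFactorizationMonoid R]
    (abv : AbsoluteValue R ℝ) : Prop :=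
  (∀ u : R, IsUnit u → abv u = 1) ∧
    (∀ p q : R, Prime p → Prime q → abv p < 1 → 1 < abv q →
      ∃ r : R, Prime r ∧ ¬ Associated r p ∧ abv r < 1)

/-!
Both halves are Euclid-style arguments. Given finitely many small primes, let `y` be the product
of `p'` (the prime supplied by the p-property) with those of them not associated to `p`; then `p`
and `y` are coprime of absolute value `< 1`, so for large `n` the element `p ^ n + y ^ n` is
nonzero of absolute value `< 1` and has a small prime factor, which divides neither `p` nor `y`.
Given finitely many large primes, let `y` be their product with `q`; for large `n`,
`|y ^ n + p| > 1`, so `y ^ n + p` has a large prime factor, and it cannot divide `y`, since it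
would then divide `p` and have absolute value `|p| < 1`.
-/

theorem exists_infinite_pairwise_not_associated {M : Type*} [Monoid M] (P : M → Prop)
    (h : ∀ F : Finset M, (∀ x ∈ F, P x) → ∃ r, P r ∧ ∀ x ∈ F, ¬ Associated r x) :
    ∃ S : Set M, S.Infinite ∧ (∀ x ∈ S, P x) ∧
      ∀ x ∈ S, ∀ y ∈ S, x ≠ y → ¬ Associated x y := by
  -- `S` picks one representative of each associate class of elements satisfying `P`.
  obtain ⟨S, hSP, hS⟩ := Set.exists_subset_bijOn {x | P x} Associates.mk
  refine ⟨S, fun hfin => ?_, hSP, fun x hx y hy hxy hassoc =>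
    hxy (hS.injOn hx hy (Associates.mk_eq_mk_iff_associated.mpr hassoc))⟩
  obtain ⟨r, hr, hrS⟩ := h hfin.toFinset fun x hx => hSP (hfin.mem_toFinset.mp hx)
  obtain ⟨x, hx, hxr⟩ := hS.surjOn ⟨r, hr, rfl⟩
  exact hrS x (hfin.mem_toFinset.mpr hx) (Associates.mk_eq_mk_iff_associated.mp hxr).symm

section AbsoluteValue

variable {R : Type*} [CommRing R] {abv : AbsoluteValue R ℝ}

theorem abv_eq_of_associated (hu : ∀ u : R, IsUnit u → abv u = 1) {a b : R}
    (h : Associated a b) : abv a = abv b := by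
  obtain ⟨u, rfl⟩ := h
  rw [map_mul, hu u u.isUnit, mul_one]

variable [UniqueFactorizationMonoid R]

theorem exists_prime_dvd_abv_lt_one
    (hu : ∀ u : R, IsUnit u → abv u = 1) {x : R} (hx0 : x ≠ 0)
    (hx : abv x < 1) : ∃ r, Prime r ∧ r ∣ x ∧ abv r < 1 := by
  induction x using UniqueFactorizationMonoid.induction_on_prime with
  | h₁ => exact absurd rfl hx0
  | h₂ u hu' => exact absurd (hu u hu') hx.ne
  | h₃ a p ha hp ih =>
    rw [map_mul] at hx
    by_cases hp1 : abv p < 1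
    · exact ⟨p, hp, dvd_mul_right p a, hp1⟩
    · have ha1 : abv a < 1 := by nlinarith [abv.nonneg a]
      obtain ⟨r, hr, hra, hr1⟩ := ih ha ha1
      exact ⟨r, hr, hra.mul_left p, hr1⟩

theorem exists_prime_dvd_one_lt_abv
    (hu : ∀ u : R, IsUnit u → abv u = 1) {x : R} (hx0 : x ≠ 0)
    (hx : 1 < abv x) : ∃ r, Prime r ∧ r ∣ x ∧ 1 < abv r := by
  induction x using UniqueFactorizationMonoid.induction_on_prime with
  | h₁ => exact absurd rfl hx0
  | h₂ u hu' => exact absurd (hu u hu') hx.ne'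
  | h₃ a p ha hp ih =>
    rw [map_mul] at hx
    by_cases hp1 : 1 < abv p
    · exact ⟨p, hp, dvd_mul_right p a, hp1⟩
    · have ha1 : 1 < abv a := by nlinarith [abv.nonneg a, abv.nonneg p]
      obtain ⟨r, hr, hra, hr1⟩ := ih ha ha1
      exact ⟨r, hr, hra.mul_left p, hr1⟩

variable [IsDomain R]

theorem exists_prime_abv_lt_one_not_dvd
    (hu : ∀ u : R, IsUnit u → abv u = 1) {x y : R}
    (hx : abv x < 1) (hy : abv y < 1) (hxy : IsRelPrime x y) :
    ∃ r, Prime r ∧ abv r < 1 ∧ ¬ r ∣ x ∧ ¬ r ∣ y := by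
  obtain ⟨n, hn⟩ := exists_pow_lt_of_lt_one (by norm_num : (0 : ℝ) < 1 / 2) (max_lt hx hy)
  have hn0 : n ≠ 0 := by rintro rfl; norm_num at hn
  have hxn : abv x ^ n ≤ max (abv x) (abv y) ^ n :=
    pow_le_pow_left₀ (abv.nonneg x) (le_max_left _ _) n
  have hyn : abv y ^ n ≤ max (abv x) (abv y) ^ n :=
    pow_le_pow_left₀ (abv.nonneg y) (le_max_right _ _) n
  have hsum : abv (x ^ n + y ^ n) < 1 := by
    calc abv (x ^ n + y ^ n) ≤ abv x ^ n + abv y ^ n := by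
          rw [← map_pow, ← map_pow]; exact abv.add_le _ _
      _ < 1 := by linarith
  have hsum0 : x ^ n + y ^ n ≠ 0 := by
    intro h0
    have hxy' : x ∣ y ^ n := by
      rw [eq_neg_of_add_eq_zero_right h0]; exact (dvd_pow_self x hn0).neg_right
    exact hx.ne (hu x ((hxy.pow_right (n := n)).isUnit_of_dvd hxy'))
  obtain ⟨r, hr, hrsum, hr1⟩ := exists_prime_dvd_abv_lt_one hu hsum0 hsum
  refine ⟨r, hr, hr1, fun hrx => ?_, fun hry => ?_⟩
  · have hry : r ∣ y := hr.dvd_of_dvd_pow ((dvd_add_right (dvd_pow hrx hn0)).mp hrsum)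
    exact hr.not_isUnit (hxy hrx hry)
  · have hrx : r ∣ x := hr.dvd_of_dvd_pow ((dvd_add_left (dvd_pow hry hn0)).mp hrsum)
    exact hr.not_isUnit (hxy hrx hry)

theorem exists_prime_one_lt_abv_not_dvd
    (hu : ∀ u : R, IsUnit u → abv u = 1) {p y : R}
    (hp : Prime p) (hp1 : abv p < 1) (hy : 1 < abv y) :
    ∃ r, Prime r ∧ 1 < abv r ∧ ¬ r ∣ y := by
  obtain ⟨n, hn⟩ := pow_unbounded_of_one_lt (2 : ℝ) hy
  have hn0 : n ≠ 0 := by rintro rfl; norm_num at hn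
  have hsum : 1 < abv (y ^ n + p) := by
    have := abv.le_add (y ^ n) p
    rw [map_pow] at this
    linarith
  have hsum0 : y ^ n + p ≠ 0 := by
    rintro h0; rw [h0, map_zero] at hsum; linarith
  obtain ⟨r, hr, hrsum, hr1⟩ := exists_prime_dvd_one_lt_abv hu hsum0 hsum
  refine ⟨r, hr, hr1, fun hry => ?_⟩
  have hrp : Associated r p :=
    hr.associated_of_dvd hp ((dvd_add_right (dvd_pow hry hn0)).mp hrsum)
  linarith [abv_eq_of_associated hu hrp]

open Classical in
theorem exists_prime_abv_lt_one_not_associated_mem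
    (hu : ∀ u : R, IsUnit u → abv u = 1)
    {p p' : R} (hp : Prime p) (hp' : Prime p') (hp1 : abv p < 1) (hp'1 : abv p' < 1)
    (hpp' : ¬ Associated p' p) (F : Finset R) (hF : ∀ x ∈ F, Prime x ∧ abv x < 1) :
    ∃ r, (Prime r ∧ abv r < 1) ∧ ∀ x ∈ F, ¬ Associated r x := by
  set G := F.filter fun x => ¬ Associated x p
  have hy : abv (p' * ∏ x ∈ G, x) < 1 := by
    rw [map_mul, map_prod]
    have : ∏ x ∈ G, abv x ≤ 1 := Finset.prod_le_one (fun x _ => abv.nonneg x)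
      fun x hx => (hF x (Finset.mem_filter.mp hx).1).2.le
    nlinarith [abv.nonneg p']
  have hpy : IsRelPrime p (p' * ∏ x ∈ G, x) := by
    refine hp.irreducible.isRelPrime_iff_not_dvd.mpr fun hdvd => ?_
    rcases hp.dvd_mul.mp hdvd with hpp'' | hpG
    · exact hpp' (hp.associated_of_dvd hp' hpp'').symm
    · obtain ⟨x, hxG, hpx⟩ := (hp.dvd_finsetProd_iff _).mp hpG
      have hxF := Finset.mem_filter.mp hxG
      exact hxF.2 (hp.associated_of_dvd (hF x hxF.1).1 hpx).symm
  obtain ⟨r, hr, hr1, hrp, hry⟩ := exists_prime_abv_lt_one_not_dvd hu hp1 hy hpy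
  refine ⟨r, ⟨hr, hr1⟩, fun x hxF hrx => ?_⟩
  by_cases hxp : Associated x p
  · exact hrp (hrx.trans hxp).dvd
  · exact hry (hrx.dvd.trans ((Finset.dvd_prod_of_mem id
      (Finset.mem_filter.mpr ⟨hxF, hxp⟩)).mul_left p'))

theorem exists_prime_one_lt_abv_not_associated_mem
    (hu : ∀ u : R, IsUnit u → abv u = 1)
    {p q : R} (hp : Prime p) (hp1 : abv p < 1) (hq1 : 1 < abv q) (F : Finset R)
    (hF : ∀ x ∈ F, 1 ≤ abv x) :
    ∃ r, (Prime r ∧ 1 < abv r) ∧ ∀ x ∈ F, ¬ Associated r x := by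
  have hy : 1 < abv (q * ∏ x ∈ F, x) := by
    rw [map_mul, map_prod]
    have : 1 ≤ ∏ x ∈ F, abv x := Finset.one_le_prod hF
    nlinarith
  obtain ⟨r, hr, hr1, hry⟩ := exists_prime_one_lt_abv_not_dvd hu hp hp1 hy
  exact ⟨r, ⟨hr, hr1⟩, fun x hxF hrx =>
    hry (hrx.dvd.trans ((Finset.dvd_prod_of_mem id hxF).mul_left q))⟩

end AbsoluteValue

/-- **Infinitely many small and large primes in a UFD with the p-property.**
If `R` is a UFD with the p-property containing primes `p`, `q` with `|p| < 1 < |q|`, then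
there are infinitely many pairwise non-associated primes of absolute value `< 1` and
infinitely many pairwise non-associated primes of absolute value `> 1`. -/
theorem infinitely_many_small_and_large_primes (R : Type) [CommRing R] [IsDomain R]
    [UniqueFactorizationMonoid R] (abv : AbsoluteValue R ℝ)
    (hR : IsUFDWithPProperty R abv)
    (p q : R) (hp : Prime p) (hq : Prime q) (hp1 : abv p < 1) (hq1 : 1 < abv q) :
    (∃ S : Set R, S.Infinite ∧ (∀ x ∈ S, Prime x ∧ abv x < 1) ∧
      ∀ x ∈ S, ∀ y ∈ S, x ≠ y → ¬ Associated x y) ∧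
    (∃ T : Set R, T.Infinite ∧ (∀ x ∈ T, Prime x ∧ 1 < abv x) ∧
      ∀ x ∈ T, ∀ y ∈ T, x ≠ y → ¬ Associated x y) := by
  obtain ⟨hu, hsmall⟩ := hR
  obtain ⟨p', hp', hp'p, hp'1⟩ := hsmall p q hp hq hp1 hq1
  exact ⟨exists_infinite_pairwise_not_associated _ fun F hF =>
      exists_prime_abv_lt_one_not_associated_mem hu hp hp' hp1 hp'1 hp'p F hF,
    exists_infinite_pairwise_not_associated _ fun F hF =>
      exists_prime_one_lt_abv_not_associated_mem hu hp hp1 hq1 F fun x hx => (hF x hx).2.le⟩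
end

section
/- Let R be an integral domain, h : R → [0,∞) a function, and U the hyperfilter on ℕ (a nonprincipal ultrafilter). Extend h to the ultrapower ring Germ U R by acting componentwise, so that for x ∈ Germ U R, h(x) ∈ Germ U ℝ. Then h is a height function on R if and only if the set R_fin = { x ∈ Germ U R : h(x) ≤ n for some n ∈ ℕ } is a subring of Germ U R (equivalently, is closed under addition and multiplication). -/
open Filter

/-!
A germ `x = [f]` has finite height iff `h ∘ f` is bounded by some `n` on a set of the
ultrafilter, so a bound `θ` for `h` on a binary operation transfers to germs pointwise.
Conversely, if no `θ n` exists, choose `f i`, `g i` of height at most `n` with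
`h (f i ⋆ g i) > i`: the germs `[f]`, `[g]` have finite height but `[f ⋆ g]` does not, because
the ultrafilter is nonprincipal and so contains every cofinite set `{i | N < i}`.
-/

namespace Filter.Germ

variable {ι α : Type*} {l : Filter ι}

def HasFiniteHeight (h : α → ℝ) (x : Germ l α) : Prop :=
  ∃ n : ℕ, x.map h ≤ Germ.const (n : ℝ)

theorem hasFiniteHeight_coe_iff {h : α → ℝ} {f : ι → α} :
    HasFiniteHeight h (f : Germ l α) ↔ ∃ n : ℕ, ∀ᶠ i in l, h (f i) ≤ n := by
  simp only [HasFiniteHeight, map_coe, Germ.const, coe_le]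
  rfl

theorem HasFiniteHeight.map₂ {h : α → ℝ} {op : α → α → α} {θ : ℕ → ℕ}
    (hθ : ∀ x y (n : ℕ), h x ≤ n → h y ≤ n → h (op x y) ≤ θ n) {x y : Germ l α}
    (hx : HasFiniteHeight h x) (hy : HasFiniteHeight h y) :
    HasFiniteHeight h (Germ.map₂ op x y) := by
  induction x using Germ.inductionOn with | h f =>
  induction y using Germ.inductionOn with | h g =>
  obtain ⟨n, hn⟩ := hasFiniteHeight_coe_iff.1 hx
  obtain ⟨m, hm⟩ := hasFiniteHeight_coe_iff.1 hy
  refine hasFiniteHeight_coe_iff.2 ⟨θ (max n m), ?_⟩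
  filter_upwards [hn, hm] with i hfi hgi
  exact hθ _ _ _ (hfi.trans (mod_cast le_max_left n m)) (hgi.trans (mod_cast le_max_right n m))

theorem exists_height_bound_of_hasFiniteHeight_map₂ {l : Filter ℕ} [l.NeBot] (hl : l ≤ atTop)
    {h : α → ℝ} {op : α → α → α}
    (H : ∀ x y : Germ l α, HasFiniteHeight h x → HasFiniteHeight h y →
      HasFiniteHeight h (Germ.map₂ op x y)) :
    ∃ θ : ℕ → ℕ, ∀ x y (n : ℕ), h x ≤ n → h y ≤ n → h (op x y) ≤ θ n := by
  suffices ∀ n : ℕ, ∃ m : ℕ, ∀ x y, h x ≤ n → h y ≤ n → h (op x y) ≤ m by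
    choose θ hθ using this
    exact ⟨θ, fun x y n => hθ n x y⟩
  intro n
  by_contra! hunbounded
  choose f g hf hg hfg using hunbounded
  obtain ⟨N, hN⟩ := hasFiniteHeight_coe_iff.1 <|
    H f g (hasFiniteHeight_coe_iff.2 ⟨n, .of_forall hf⟩)
      (hasFiniteHeight_coe_iff.2 ⟨n, .of_forall hg⟩)
  obtain ⟨i, hiN, hNi⟩ := (hN.and (hl (eventually_gt_atTop N))).exists
  exact (hfg i).not_ge (hiN.trans (mod_cast hNi.le))

end Filter.Germ

theorem height_function_iff_finite_part_subring_general (R : Type) [CommRing R]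
    (h : R → ℝ) :
    (∃ θ : ℕ → ℕ, ∀ (x y : R) (n : ℕ), h x ≤ n → h y ≤ n →
        h (x + y) ≤ θ n ∧ h (x * y) ≤ θ n) ↔
      ∀ x y : Germ (Filter.hyperfilter ℕ : Filter ℕ) R,
        (∃ n : ℕ, x.map h ≤ (Germ.const (n : ℝ))) →
        (∃ n : ℕ, y.map h ≤ (Germ.const (n : ℝ))) →
        (∃ n : ℕ, (x + y).map h ≤ (Germ.const (n : ℝ))) ∧
          (∃ n : ℕ, (x * y).map h ≤ (Germ.const (n : ℝ))) := by
  constructor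
  · rintro ⟨θ, hθ⟩ x y hx hy
    exact ⟨Germ.HasFiniteHeight.map₂ (fun x y n hx hy => (hθ x y n hx hy).1) hx hy,
      Germ.HasFiniteHeight.map₂ (fun x y n hx hy => (hθ x y n hx hy).2) hx hy⟩
  · intro H
    obtain ⟨θ₁, hθ₁⟩ := Germ.exists_height_bound_of_hasFiniteHeight_map₂
      Nat.hyperfilter_le_atTop (op := (· + ·)) fun x y hx hy => (H x y hx hy).1
    obtain ⟨θ₂, hθ₂⟩ := Germ.exists_height_bound_of_hasFiniteHeight_map₂
      Nat.hyperfilter_le_atTop (op := (· * ·)) fun x y hx hy => (H x y hx hy).2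
    refine ⟨fun n => max (θ₁ n) (θ₂ n), fun x y n hx hy => ⟨?_, ?_⟩⟩
    · exact (hθ₁ x y n hx hy).trans (mod_cast le_max_left _ _)
    · exact (hθ₂ x y n hx hy).trans (mod_cast le_max_right _ _)

/-- **Nonstandard characterization of height functions.**
Let `R` be an integral domain, `h : R → [0,∞)`, and `U` the hyperfilter on `ℕ`.  Extend `h`
componentwise to the ultrapower `Germ U R`.  Then `h` is a height function on `R` (i.e. of
`θ`-type for some `θ : ℕ → ℕ`) iff the set
`R_fin = {x : Germ U R | h(x) ≤ n for some n ∈ ℕ}` is closed under addition and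
multiplication (equivalently, a subring). -/
theorem height_function_iff_finite_part_subring (R : Type) [CommRing R] [IsDomain R]
    (h : R → ℝ) (h0 : ∀ x : R, 0 ≤ h x) :
    (∃ θ : ℕ → ℕ, ∀ (x y : R) (n : ℕ), h x ≤ n → h y ≤ n →
        h (x + y) ≤ θ n ∧ h (x * y) ≤ θ n) ↔
      ∀ x y : Germ (Filter.hyperfilter ℕ : Filter ℕ) R,
        (∃ n : ℕ, x.map h ≤ (Germ.const (n : ℝ))) →
        (∃ n : ℕ, y.map h ≤ (Germ.const (n : ℝ))) →
        (∃ n : ℕ, (x + y).map h ≤ (Germ.const (n : ℝ))) ∧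
          (∃ n : ℕ, (x * y).map h ≤ (Germ.const (n : ℝ))) :=
  height_function_iff_finite_part_subring_general R h
end

section
/- There exist a natural number A and two sequences (a_n) and (b_n) of positive integers such that d(a_n) ≤ A and d(b_n) ≤ A for all n, but d(a_n + b_n) → ∞ as n → ∞, where d(m) denotes the number of divisors of m. -/
/-! Take `a_n` a prime `p ≡ -1 (mod 2^n)`, which exists by Dirichlet's theorem, and
`b_n = 1`. Then `d(a_n) = 2` and `d(b_n) = 1`, while `2^n ∣ a_n + b_n` forces
`d(a_n + b_n) ≥ d(2^n) = n + 1`. -/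

open Filter Finset

theorem Nat.exists_prime_dvd_add_one {m : ℕ} (hm : m ≠ 0) : ∃ p, p.Prime ∧ m ∣ p + 1 := by
  have : NeZero m := ⟨hm⟩
  obtain ⟨p, -, hp, hp_mod⟩ :=
    Nat.forall_exists_prime_gt_and_eq_mod (isUnit_one (M := ZMod m)).neg 0
  refine ⟨p, hp, (ZMod.natCast_eq_zero_iff _ _).mp ?_⟩
  push_cast [hp_mod]
  ring

theorem Nat.card_divisors_le_of_dvd {m n : ℕ} (hn : n ≠ 0) (h : m ∣ n) :
    #m.divisors ≤ #n.divisors :=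
  card_le_card (Nat.divisors_subset_of_dvd hn h)

theorem Nat.card_divisors_prime_pow {p : ℕ} (hp : p.Prime) (k : ℕ) :
    #(p ^ k).divisors = k + 1 := by
  rw [← ArithmeticFunction.sigma_zero_apply, ArithmeticFunction.sigma_zero_apply_prime_pow hp]

/-- There are a natural number `A` and sequences `(a_n)`, `(b_n)` of positive integers
with `d(a_n) ≤ A` and `d(b_n) ≤ A` for all `n`, while `d(a_n + b_n) → ∞`,
where `d(m)` is the number of (positive) divisors of `m`. -/
theorem divisor_function_not_height : ∃ (A : ℕ) (a b : ℕ → ℕ),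
    (∀ n, 0 < a n) ∧ (∀ n, 0 < b n) ∧
    (∀ n, (Nat.divisors (a n)).card ≤ A) ∧ (∀ n, (Nat.divisors (b n)).card ≤ A) ∧
    Tendsto (fun n => (Nat.divisors (a n + b n)).card) atTop atTop := by
  choose p hp hdvd using fun n : ℕ => Nat.exists_prime_dvd_add_one (pow_ne_zero n two_ne_zero)
  refine ⟨2, p, fun _ => 1, fun n => (hp n).pos, fun _ => one_pos, fun n => ?_, fun _ => ?_, ?_⟩
  · rw [(hp n).divisors]
    exact card_le_two
  · simp
  · refine tendsto_atTop_mono (fun n => ?_) tendsto_id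
    calc n ≤ #(2 ^ n).divisors := by rw [Nat.card_divisors_prime_pow Nat.prime_two]; omega
      _ ≤ #(p n + 1).divisors := Nat.card_divisors_le_of_dvd (Nat.succ_ne_zero _) (hdvd n)
end
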